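/- Let F be a field of characteristic zero, V a finite-dimensional F-vector space, N a nilpotent endomorphism of V, and m ≥ 1 an integer with N^{m+1} = 0. If (W_k)_{k ∈ ℤ} is a weight filtration for N, then W_k = V and W_{-k-1} = 0 for all k ≥ m, and moreover W_{m-1} = ker(N^m) and W_{-m} = im(N^m). -/

import Mathlib

/-- `W` is a weight filtration for the nilpotent endomorphism `N` of `V`:
an increasing filtration, exhaustive and separated, with `N (W k) ⊆ W (k-2)`,
and such that for every natural number `k`, `N^k` maps `W k` into `W (-k)` and
the induced map `W k / W (k-1) → W (-k) / W (-k-1)` is an isomorphism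
(expressed via injectivity and surjectivity of the induced map). -/
def IsWeightFiltration (F : Type*) [Field F] {V : Type*} [AddCommGroup V] [Module F V]
    (N : V →ₗ[F] V) (W : ℤ → Submodule F V) : Prop :=
  (∀ k : ℤ, W k ≤ W (k + 1)) ∧
  (∃ a : ℤ, ∀ k : ℤ, k ≤ a → W k = ⊥) ∧
  (∃ b : ℤ, ∀ k : ℤ, b ≤ k → W k = ⊤) ∧
  (∀ k : ℤ, ∀ x : V, x ∈ W k → N x ∈ W (k - 2)) ∧
  (∀ j : ℕ,
    (∀ x : V, x ∈ W (j : ℤ) → (N ^ j) x ∈ W (-(j : ℤ))) ∧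
    (∀ x : V, x ∈ W (j : ℤ) → (N ^ j) x ∈ W (-(j : ℤ) - 1) → x ∈ W ((j : ℤ) - 1)) ∧
    (∀ y : V, y ∈ W (-(j : ℤ)) → ∃ x ∈ W (j : ℤ), y - (N ^ j) x ∈ W (-(j : ℤ) - 1)))

/-! Since `N ^ j = 0` for `j > m`, the isomorphisms `Gr_j W ≅ Gr_{-j} W` induced by `N ^ j` force
`Gr_j W = 0` and `Gr_{-j} W = 0` for every `j > m`; as the filtration is exhaustive and separated,
`W m = V` and `W (-m-1) = 0`. With these, injectivity of `N ^ m : Gr_m W → Gr_{-m} W` identifies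
`W (m-1)` with `ker (N ^ m)`, and surjectivity identifies `W (-m)` with `im (N ^ m)`. -/

namespace IsWeightFiltration

variable {F : Type*} [Field F] {V : Type*} [AddCommGroup V] [Module F V]
  {N : V →ₗ[F] V} {W : ℤ → Submodule F V}

theorem monotone (hW : IsWeightFiltration F N W) : Monotone W :=
  monotone_int_of_le_succ hW.1

theorem pow_apply_mem (hW : IsWeightFiltration F N W) (n : ℕ) {k : ℤ} {x : V} (hx : x ∈ W k) :
    (N ^ n) x ∈ W (k - 2 * n) := by
  induction n with
  | zero => simpa using hx
  | succ n ih =>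
    rw [pow_succ', Module.End.mul_apply]
    convert hW.2.2.2.1 _ _ ih using 2
    push_cast
    ring

theorem le_sub_one_of_pow_eq_zero (hW : IsWeightFiltration F N W) {j : ℕ} (hj : N ^ j = 0) :
    W j ≤ W (j - 1) := fun x hx ↦
  (hW.2.2.2.2 j).2.1 x hx (by simp [hj])

theorem neg_le_neg_sub_one_of_pow_eq_zero (hW : IsWeightFiltration F N W) {j : ℕ}
    (hj : N ^ j = 0) : W (-j) ≤ W (-j - 1) := fun y hy ↦ by
  obtain ⟨x, -, hxy⟩ := (hW.2.2.2.2 j).2.2 y hy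
  simpa [hj] using hxy

variable {m : ℕ}

theorem eq_top_of_pow_succ_eq_zero (hW : IsWeightFiltration F N W) (hN : N ^ (m + 1) = 0) :
    W m = ⊤ := by
  have descend : ∀ n : ℕ, W (m + n : ℕ) ≤ W m := by
    intro n
    induction n with
    | zero => rfl
    | succ n ih =>
      calc W (m + (n + 1) : ℕ)
          ≤ W ((m + (n + 1) : ℕ) - 1) :=
            hW.le_sub_one_of_pow_eq_zero (pow_eq_zero_of_le (by omega) hN)
        _ = W (m + n : ℕ) := by push_cast; ring_nf
        _ ≤ W m := ih
  obtain ⟨b, hb⟩ := hW.2.2.1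
  exact top_unique <| hb (m + b.toNat : ℕ) (by omega) ▸ descend b.toNat

theorem eq_bot_of_pow_succ_eq_zero (hW : IsWeightFiltration F N W) (hN : N ^ (m + 1) = 0) :
    W (-m - 1) = ⊥ := by
  have descend : ∀ n : ℕ, W (-m - 1) ≤ W (-(m + 1 + n : ℕ)) := by
    intro n
    induction n with
    | zero => simp [sub_eq_add_neg, add_comm]
    | succ n ih =>
      calc W (-m - 1)
          ≤ W (-(m + 1 + n : ℕ)) := ih
        _ ≤ W (-(m + 1 + n : ℕ) - 1) :=
            hW.neg_le_neg_sub_one_of_pow_eq_zero (pow_eq_zero_of_le (by omega) hN)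
        _ = W (-(m + 1 + (n + 1) : ℕ)) := by push_cast; ring_nf
  obtain ⟨a, ha⟩ := hW.2.1
  exact eq_bot_iff.mpr <| ha (-(m + 1 + (-a).toNat : ℕ)) (by omega) ▸ descend (-a).toNat

theorem sub_one_eq_ker_pow (hW : IsWeightFiltration F N W) (htop : W m = ⊤)
    (hbot : W (-m - 1) = ⊥) : W (m - 1) = LinearMap.ker (N ^ m) := by
  refine le_antisymm (fun x hx ↦ ?_) (fun x hx ↦ ?_)
  · have hNx := hW.pow_apply_mem m hx
    rwa [show (m : ℤ) - 1 - 2 * m = -m - 1 by ring, hbot, Submodule.mem_bot] at hNx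
  · exact (hW.2.2.2.2 m).2.1 x (htop ▸ Submodule.mem_top) (by simp_all)

theorem neg_eq_range_pow (hW : IsWeightFiltration F N W) (htop : W m = ⊤)
    (hbot : W (-m - 1) = ⊥) : W (-m) = LinearMap.range (N ^ m) := by
  refine le_antisymm (fun y hy ↦ ?_) ?_
  · obtain ⟨x, -, hxy⟩ := (hW.2.2.2.2 m).2.2 y hy
    rw [hbot, Submodule.mem_bot, sub_eq_zero] at hxy
    exact ⟨x, hxy.symm⟩
  · rintro - ⟨x, rfl⟩
    exact (hW.2.2.2.2 m).1 x (htop ▸ Submodule.mem_top)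

end IsWeightFiltration

theorem weightFiltration_of_pow_eq_zero_general (F : Type*) [Field F]
    (V : Type*) [AddCommGroup V] [Module F V]
    (N : V →ₗ[F] V) (m : ℕ) (hN : N ^ (m + 1) = 0)
    (W : ℤ → Submodule F V) (hW : IsWeightFiltration F N W) :
    (∀ k : ℤ, (m : ℤ) ≤ k → W k = ⊤ ∧ W (-k - 1) = ⊥) ∧
    W ((m : ℤ) - 1) = LinearMap.ker (N ^ m) ∧
    W (-(m : ℤ)) = LinearMap.range (N ^ m) := by
  have htop := hW.eq_top_of_pow_succ_eq_zero hN
  have hbot := hW.eq_bot_of_pow_succ_eq_zero hN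
  refine ⟨fun k hk ↦ ⟨?_, ?_⟩, hW.sub_one_eq_ker_pow htop hbot, hW.neg_eq_range_pow htop hbot⟩
  · exact top_unique (htop ▸ hW.monotone hk)
  · exact eq_bot_iff.mpr (hbot ▸ hW.monotone (by omega))

/-- If `N^(m+1) = 0` with `m ≥ 1` and `W` is a weight filtration for `N`, then
`W k = V` and `W (-k-1) = 0` for all `k ≥ m`, `W (m-1) = ker (N^m)` and
`W (-m) = im (N^m)`. -/
theorem weightFiltration_of_pow_eq_zero (F : Type*) [Field F] [CharZero F]
    (V : Type*) [AddCommGroup V] [Module F V] [FiniteDimensional F V]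
    (N : V →ₗ[F] V) (m : ℕ) (hm : 1 ≤ m) (hN : N ^ (m + 1) = 0)
    (W : ℤ → Submodule F V) (hW : IsWeightFiltration F N W) :
    (∀ k : ℤ, (m : ℤ) ≤ k → W k = ⊤ ∧ W (-k - 1) = ⊥) ∧
    W ((m : ℤ) - 1) = LinearMap.ker (N ^ m) ∧
    W (-(m : ℤ)) = LinearMap.range (N ^ m) :=
  weightFiltration_of_pow_eq_zero_general F V N m hN W hW
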